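/- For any map of finite groupoids f : E → B, the cardinality of E equals Σ over isomorphism classes b of B of |E_b| / |Aut(b)|, where E_b is the homotopy fibre (or full essential preimage) of f over b. -/

import Mathlib

/-!
Over a class `[e]` of `E`, the objects `(e, φ)` of the homotopy fibre `E_b` form the action
groupoid of `Aut e` acting on `F e ⟶ b`: two of them are isomorphic iff the arrows lie in one
orbit, and the automorphisms of `(e, φ)` form the stabilizer of `φ`. By orbit–stabilizer,
`|E_b| = Σ_[e] |F e ⟶ b| / |Aut e|`. Dividing by `|Aut b|`, summing over `[b]` and exchanging
the sums weights each `1 / |Aut e|` by `Σ_[b] |F e ⟶ b| / |Aut b|`, which is `1`: only the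
class of `F e` receives arrows from `F e`, and for `b ≅ F e` there are `|Aut b|` of them.
-/

open CategoryTheory

noncomputable section

/-- Groupoid cardinality: `|X| = Σ_{x ∈ π₀X} 1/|Aut x|`. -/
def gcard (C : Type*) [Category C] : ℚ :=
  ∑ᶠ q : Quotient (isIsomorphicSetoid C), ((Nat.card (Aut (Quotient.out q)) : ℚ))⁻¹

open MulAction

local notation "π₀ " C:max => Quotient (isIsomorphicSetoid C)

theorem MulAction.finsum_inv_card_stabilizer_out (G X : Type*) [Group G] [MulAction G X]
    [Finite G] [Finite X] :
    ∑ᶠ ω : orbitRel.Quotient G X, ((Nat.card (stabilizer G ω.out) : ℚ))⁻¹ =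
      Nat.card X / Nat.card G := by
  classical
  have : Fintype (orbitRel.Quotient G X) := Fintype.ofFinite _
  have orbit_stabilizer (x : X) :
      ((Nat.card (stabilizer G x) : ℚ))⁻¹ = Nat.card (orbit G x) / Nat.card G := by
    have : Nonempty (orbit G x) := ⟨⟨x, mem_orbit_self x⟩⟩
    have : (Nat.card (orbit G x) : ℚ) ≠ 0 := Nat.cast_ne_zero.mpr Nat.card_pos.ne'
    rw [← Nat.card_congr (orbitProdStabilizerEquivGroup G x), Nat.card_prod, Nat.cast_mul,
      div_mul_cancel_left₀ this]
  simp only [finsum_eq_sum_of_fintype, orbit_stabilizer, ← Finset.sum_div, ← Nat.cast_sum,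
    ← Nat.card_sigma, ← Nat.card_congr (selfEquivSigmaOrbits G X)]

namespace CategoryTheory

namespace Groupoid

variable {C : Type*} [Groupoid C]

def homEquivAut {x y : C} (f : x ⟶ y) : (x ⟶ y) ≃ Aut y :=
  ((asIso f).homCongr (Iso.refl y)).trans (isoEquivHom y y).symm

theorem card_hom_eq_card_aut {x y : C} (f : x ⟶ y) : Nat.card (x ⟶ y) = Nat.card (Aut y) :=
  Nat.card_congr (homEquivAut f)

instance finite_hom (x y : C) [Finite (Aut y)] : Finite (x ⟶ y) := by
  rcases isEmpty_or_nonempty (x ⟶ y) with _ | ⟨⟨f⟩⟩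
  · infer_instance
  · exact Finite.of_equiv _ (homEquivAut f).symm

end Groupoid

variable {C : Type*} [Category C]

def outMkIso (x : C) : (⟦x⟧ : π₀ C).out ≅ x :=
  (Quotient.mk_out (s := isIsomorphicSetoid C) x).some

theorem mk_eq_of_iso {x y : C} (f : x ≅ y) : (⟦x⟧ : π₀ C) = ⟦y⟧ :=
  _root_.Quotient.sound (s := isIsomorphicSetoid C) ⟨f⟩

theorem card_aut_out_mk (x : C) : Nat.card (Aut (⟦x⟧ : π₀ C).out) = Nat.card (Aut x) :=
  Nat.card_congr (Aut.autMulEquivOfIso (outMkIso x)).toEquiv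

theorem finsum_card_hom_div_card_aut {B : Type*} [Groupoid B] [∀ b : B, Finite (Aut b)] (y : B) :
    ∑ᶠ q : π₀ B, (Nat.card (y ⟶ q.out) : ℚ) / Nat.card (Aut q.out) = 1 := by
  rw [finsum_eq_single _ ⟦y⟧]
  · rw [Groupoid.card_hom_eq_card_aut (outMkIso y).inv]
    exact div_self (Nat.cast_ne_zero.mpr Nat.card_pos.ne')
  · intro q hq
    have : IsEmpty (y ⟶ q.out) := ⟨fun f =>
      hq (Quotient.out_eq q ▸ mk_eq_of_iso ((Groupoid.isoEquivHom _ _).symm f)).symm⟩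
    simp

variable {E B : Type*} [Category E] [Category B] (F : E ⥤ B) (b : B)

instance Functor.mulActionAutHom (e : E) : MulAction (Aut e) (F.obj e ⟶ b) where
  smul u φ := F.map u.inv ≫ φ
  one_smul φ := by
    change F.map (𝟙 e) ≫ φ = φ
    simp
  mul_smul u v φ := by
    change F.map (u.inv ≫ v.inv) ≫ φ = F.map u.inv ≫ F.map v.inv ≫ φ
    simp

namespace CostructuredArrow

theorem mk_eq_mk_iff_mem_orbit {e : E} (φ ψ : F.obj e ⟶ b) :
    (⟦mk φ⟧ : π₀ (CostructuredArrow F b)) = ⟦mk ψ⟧ ↔ φ ∈ orbit (Aut e) ψ := by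
  constructor
  · intro h
    obtain ⟨α⟩ := Quotient.exact h
    exact ⟨(Comma.leftIso α).symm, w α.hom⟩
  · rintro ⟨u, rfl⟩
    exact mk_eq_of_iso (isoMk u.symm rfl)

def autMkEquivStabilizer {e : E} (ψ : F.obj e ⟶ b) : Aut (mk ψ) ≃ stabilizer (Aut e) ψ where
  toFun α := ⟨(Comma.leftIso α).symm, w α.hom⟩
  invFun u := isoMk u.1.symm u.2
  left_inv α := by ext; rfl
  right_inv u := by ext; rfl

def classOfOrbit :
    (Σ q : π₀ E, orbitRel.Quotient (Aut q.out) (F.obj q.out ⟶ b)) → π₀ (CostructuredArrow F b)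
  | ⟨_, ω⟩ => ω.lift (fun φ => ⟦mk φ⟧) fun φ ψ h => (mk_eq_mk_iff_mem_orbit F b φ ψ).mpr h

theorem classOfOrbit_bijective : Function.Bijective (classOfOrbit F b) := by
  constructor
  · rintro ⟨q, ⟨φ⟩⟩ ⟨q', ⟨φ'⟩⟩ h
    change (⟦mk φ⟧ : π₀ (CostructuredArrow F b)) = ⟦mk φ'⟧ at h
    obtain ⟨α⟩ := Quotient.exact h
    obtain rfl : q = q' := Quotient.out_equiv_out.mp ⟨Comma.leftIso α⟩
    exact congrArg (Sigma.mk q) (_root_.Quotient.sound ((mk_eq_mk_iff_mem_orbit F b _ _).mp h))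
  · rintro ⟨x⟩
    exact ⟨⟨⟦x.left⟧, ⟦F.map (outMkIso x.left).hom ≫ x.hom⟧⟩,
      mk_eq_of_iso (isoMk (outMkIso x.left) rfl ≪≫ (eta x).symm)⟩

theorem card_aut_out_classOfOrbit
    (s : Σ q : π₀ E, orbitRel.Quotient (Aut q.out) (F.obj q.out ⟶ b)) :
    Nat.card (Aut (classOfOrbit F b s).out) = Nat.card (stabilizer (Aut s.1.out) s.2.out) := by
  obtain ⟨q, ω⟩ := s
  conv_lhs => rw [← Quotient.out_eq ω]
  exact (card_aut_out_mk _).trans (Nat.card_congr (autMkEquivStabilizer F b _))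

end CostructuredArrow

open CostructuredArrow in
theorem gcard_costructuredArrow [Finite (π₀ E)] [∀ e : E, Finite (Aut e)]
    [∀ e : E, Finite (F.obj e ⟶ b)] :
    gcard (CostructuredArrow F b) =
      ∑ᶠ q : π₀ E, (Nat.card (F.obj q.out ⟶ b) : ℚ) / Nat.card (Aut q.out) := by
  have : Fintype (π₀ E) := Fintype.ofFinite _
  have (q : π₀ E) : Fintype (orbitRel.Quotient (Aut q.out) (F.obj q.out ⟶ b)) :=
    Fintype.ofFinite _
  rw [gcard, ← finsum_comp_equiv (Equiv.ofBijective _ (classOfOrbit_bijective F b)),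
    finsum_eq_sum_of_fintype, finsum_eq_sum_of_fintype, Fintype.sum_sigma]
  refine Finset.sum_congr rfl fun q _ => ?_
  simp only [Equiv.ofBijective_apply, card_aut_out_classOfOrbit]
  rw [← finsum_eq_sum_of_fintype, finsum_inv_card_stabilizer_out]

end CategoryTheory

/-- For a map `F : E → B` of finite groupoids, the cardinality of the total groupoid `E`
is the sum over isomorphism classes `b` of `B` of `|E_b| / |Aut b|`, where `E_b` is the
homotopy fibre of `F` over `b` (objects: pairs `(e, φ : F e ⟶ b)`). -/
theorem stmt6 {E B : Type*} [Groupoid E] [Groupoid B] (F : E ⥤ B)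
    [Finite (Quotient (isIsomorphicSetoid E))] [∀ e : E, Finite (Aut e)]
    [Finite (Quotient (isIsomorphicSetoid B))] [∀ b : B, Finite (Aut b)] :
    gcard E = ∑ᶠ q : Quotient (isIsomorphicSetoid B),
      gcard (CostructuredArrow F (Quotient.out q)) / (Nat.card (Aut (Quotient.out q)) : ℚ) := by
  have : Fintype (π₀ E) := Fintype.ofFinite _
  have : Fintype (π₀ B) := Fintype.ofFinite _
  calc gcard E
      = ∑ e : π₀ E, ((Nat.card (Aut e.out) : ℚ))⁻¹ *
          ∑ b : π₀ B, (Nat.card (F.obj e.out ⟶ b.out) : ℚ) / Nat.card (Aut b.out) := by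
        simp only [← finsum_eq_sum_of_fintype, finsum_card_hom_div_card_aut, mul_one, gcard]
    _ = ∑ b : π₀ B, ∑ e : π₀ E, ((Nat.card (Aut e.out) : ℚ))⁻¹ *
          ((Nat.card (F.obj e.out ⟶ b.out) : ℚ) / Nat.card (Aut b.out)) := by
        simp only [Finset.mul_sum]
        exact Finset.sum_comm
    _ = _ := by
        rw [finsum_eq_sum_of_fintype]
        refine Finset.sum_congr rfl fun b _ => ?_
        rw [gcard_costructuredArrow, finsum_eq_sum_of_fintype, Finset.sum_div]
        congr! 1 with e
        ring
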